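/- Let A ∈ B^{n×n}, λ ∈ B, K, L a partition of N = {1,...,n}, with L_2, L̃, Ñ = L̃ ∪ K, Λ, A', b', I_0 and C_j as defined. Then x = (x_K, x_L) ∈ B^n is a (K,L) λ-eigenvector of A if and only if there exist W ⊆ Ñ such that {C_j : j ∈ W} is a minimal covering of I_0, and v ∈ B^{|Ñ|}, such that, writing z = z^W ⊕ Λ^W ⊗ v ∈ B^{Ñ} (where z^W_j = λ for j ∈ W and 0 otherwise, and Λ^W has diagonal 1 and (Λ^W)_{ij} = z^W_i for i ≠ j) and splitting z into components z_{L̃} and z_K: x_L = λ·1_L ⊕ Λ_{L,L̃} ⊗ z_{L̃} and x_K = λ ⊗ (A_{KK})^* ⊗ A_{KL} ⊗ 1_L ⊕ (A_{KK})^* ⊗ A_{K L̃} ⊗ Λ_{L̃,L̃} ⊗ z_{L̃} ⊕ (A_{KK})^*_λ ⊗ z_K. -/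

import Mathlib

noncomputable section

/-- The max-min algebra: the unit interval `[0,1] ⊆ ℝ` with `⊕ = max = ⊔` and `⊗ = min = ⊓`. -/
abbrev B : Type := unitInterval

instance : Fact ((0:ℝ) ≤ 1) := ⟨zero_le_one⟩

/-- Max-min matrix-vector product: `(A ⊗ x)_i = max_j min (A i j) (x j)`. -/
def mmVec {α β : Type*} (A : Matrix α β B) (x : β → B) : α → B :=
  fun i => ⨆ j, A i j ⊓ x j

/-- Max-min matrix-matrix product. -/
def mmMul {α β γ : Type*} (A : Matrix α β B) (C : Matrix β γ B) : Matrix α γ B :=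
  fun i k => ⨆ j, A i j ⊓ C j k

/-- The max-min identity matrix. -/
def mmId (α : Type*) [DecidableEq α] : Matrix α α B :=
  fun i j => if i = j then 1 else 0

/-- Max-min matrix powers, `A^0 = I`. -/
def mmPow {α : Type*} [DecidableEq α] (A : Matrix α α B) : ℕ → Matrix α α B
  | 0 => mmId α
  | k + 1 => mmMul A (mmPow A k)

/-- The metric matrix `A⁺ = A ⊕ A² ⊕ ... ⊕ Aⁿ`. -/
def mmPlus {α : Type*} [Fintype α] [DecidableEq α] (A : Matrix α α B) : Matrix α α B :=
  fun i j => ⨆ k ∈ Finset.Icc 1 (Fintype.card α), mmPow A k i j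

/-- The Kleene star `A* = I ⊕ A ⊕ ... ⊕ A^{n-1}`. -/
def mmStar {α : Type*} [Fintype α] [DecidableEq α] (A : Matrix α α B) : Matrix α α B :=
  fun i j => ⨆ k ∈ Finset.range (Fintype.card α), mmPow A k i j

/-- The matrix `A*_λ`, whose `i`-th column has entries `min (λ, (A⁺)_{ii}, (A*)_{ki})`. -/
def mmStarLam {α : Type*} [Fintype α] [DecidableEq α] (A : Matrix α α B) (lam : B) :
    Matrix α α B :=
  fun k i => lam ⊓ mmPlus A i i ⊓ mmStar A k i

/-- Submatrix of `A` with rows in `P` and columns in `Q`. -/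
def subM {n : ℕ} (A : Matrix (Fin n) (Fin n) B) (P Q : Finset (Fin n)) :
    Matrix ↥P ↥Q B :=
  fun i j => A i j

/-- Subvector of `x` indexed by `P`. -/
def subV {n : ℕ} (x : Fin n → B) (P : Finset (Fin n)) : ↥P → B :=
  fun i => x i

/-- `x` is a `(K,L)` `λ`-eigenvector of `A`: `A ⊗ x = λ ⊗ x`, `x_i ≤ λ` for `i ∈ K`,
`x_i ≥ λ` for `i ∈ L`. -/
def IsKLEig {n : ℕ} (A : Matrix (Fin n) (Fin n) B) (lam : B) (K L : Finset (Fin n))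
    (x : Fin n → B) : Prop :=
  mmVec A x = (fun i => lam ⊓ x i) ∧ (∀ i ∈ K, x i ≤ lam) ∧ (∀ i ∈ L, lam ≤ x i)

/-- `L₁ = {i ∈ L : max_{j∈L} a_{ij} ≥ λ}`. -/
def L1set {n : ℕ} (A : Matrix (Fin n) (Fin n) B) (lam : B) (L : Finset (Fin n)) :
    Finset (Fin n) :=
  L.filter fun i => lam ≤ ⨆ j ∈ L, A i j

/-- `L₂ = {i ∈ L : max_{j∈L} a_{ij} < λ}`. -/
def L2set {n : ℕ} (A : Matrix (Fin n) (Fin n) B) (lam : B) (L : Finset (Fin n)) :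
    Finset (Fin n) :=
  L.filter fun i => (⨆ j ∈ L, A i j) < lam

/-- `L^{>λ,L₁} = {k ∈ L : max_{i ∈ L₁} a_{ik} > λ}`. -/
def LgtL1set {n : ℕ} (A : Matrix (Fin n) (Fin n) B) (lam : B) (L : Finset (Fin n)) :
    Finset (Fin n) :=
  L.filter fun k => lam < ⨆ i ∈ L1set A lam L, A i k

/-- `L^{>λ,K} = {ℓ ∈ L : max_{k ∈ K} ((A_{KK})* ⊗ A_{KL})_{kℓ} > λ}`. (The matrix
`(A_{KK})* ⊗ A_{K,N}` has, for `ℓ ∈ L`, exactly the same entries in column `ℓ` as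
`(A_{KK})* ⊗ A_{KL}`.) -/
def LgtKset {n : ℕ} (A : Matrix (Fin n) (Fin n) B) (lam : B) (K L : Finset (Fin n)) :
    Finset (Fin n) :=
  L.filter fun ℓ =>
    lam < ⨆ k : ↥K, mmMul (mmStar (subM A K K)) (fun (p : ↥K) (q : Fin n) => A p q) k ℓ

/-- `L' = L^{>λ,L₁} ∪ L^{>λ,K}`. -/
def LprimeSet {n : ℕ} (A : Matrix (Fin n) (Fin n) B) (lam : B) (K L : Finset (Fin n)) :
    Finset (Fin n) :=
  LgtL1set A lam L ∪ LgtKset A lam K L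

/-- `L̃ = L \ L'`. -/
def LtilSet {n : ℕ} (A : Matrix (Fin n) (Fin n) B) (lam : B) (K L : Finset (Fin n)) :
    Finset (Fin n) :=
  L \ LprimeSet A lam K L

/-- The submatrix `Λ_{P,Q}` of the matrix `Λ` with `Λ_{ii} = 1` and `Λ_{ij} = λ` for `i ≠ j`. -/
def LamSub {n : ℕ} (lam : B) (P Q : Finset (Fin n)) : Matrix ↥P ↥Q B :=
  fun p q => if (p : Fin n) = (q : Fin n) then 1 else lam

/-- `Ñ = L̃ ∪ K`. -/
def NtilSet {n : ℕ} (A : Matrix (Fin n) (Fin n) B) (lam : B) (K L : Finset (Fin n)) :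
    Finset (Fin n) :=
  LtilSet A lam K L ∪ K

/-- The matrix `A' ∈ B^{L₂ × Ñ}`: its columns indexed by `L̃` are those of
`A_{L₂K} ⊗ (A_{KK})* ⊗ A_{KL̃} ⊗ Λ_{L̃,L̃}` and its columns indexed by `K` are those of
`A_{L₂K} ⊗ (A_{KK})*_λ`. -/
def Aprime {n : ℕ} (A : Matrix (Fin n) (Fin n) B) (lam : B) (K L : Finset (Fin n)) :
    Matrix ↥(L2set A lam L) ↥(NtilSet A lam K L) B :=
  fun i j =>
    if h : (j : Fin n) ∈ LtilSet A lam K L then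
      mmMul (mmMul (mmMul (subM A (L2set A lam L) K) (mmStar (subM A K K)))
        (subM A K (LtilSet A lam K L)))
        (LamSub lam (LtilSet A lam K L) (LtilSet A lam K L)) i ⟨(j : Fin n), h⟩
    else
      mmMul (subM A (L2set A lam L) K) (mmStarLam (subM A K K) lam) i
        ⟨(j : Fin n), (Finset.mem_union.mp j.2).resolve_left h⟩

/-- The vector `b' = λ ⊗ A_{L₂K} ⊗ (A_{KK})* ⊗ A_{KL} ⊗ 1_L ∈ B^{L₂}`. -/
def bprime {n : ℕ} (A : Matrix (Fin n) (Fin n) B) (lam : B) (K L : Finset (Fin n)) :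
    ↥(L2set A lam L) → B :=
  fun i => lam ⊓
    mmVec (mmMul (mmMul (subM A (L2set A lam L) K) (mmStar (subM A K K))) (subM A K L))
      (fun _ => 1) i

/-- `I₀ = {i ∈ L₂ : b'_i < λ}`. -/
def I0set {n : ℕ} (A : Matrix (Fin n) (Fin n) B) (lam : B) (K L : Finset (Fin n)) :
    Set ↥(L2set A lam L) :=
  {i | bprime A lam K L i < lam}

/-- `C_j = {i ∈ I₀ : A'_{ij} = λ}` for `j ∈ Ñ`. -/
def CsetKL {n : ℕ} (A : Matrix (Fin n) (Fin n) B) (lam : B) (K L : Finset (Fin n))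
    (j : ↥(NtilSet A lam K L)) : Set ↥(L2set A lam L) :=
  {i | bprime A lam K L i < lam ∧ Aprime A lam K L i j = lam}

/-!
In the max-min algebra `(M^t)_{ij}` is the largest bottleneck weight of a walk of length `t`
from `i` to `j`, and a walk longer than the matrix size can be shortened by cutting out a cycle.
This yields `M ⊗ M* = M⁺`, `M ⊗ M*_λ = M*_λ`, and the key fact that `x ≤ λ` with
`x = M ⊗ x ⊕ b` forces `x = M* ⊗ b ⊕ M*_λ ⊗ x`.

For `M = A_{KK}` and `b = A_{KL} ⊗ x_L` this turns the rows `K` of the eigen-equation into the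
formula for `x_K`, while on `L \ L̃` an eigenvector equals `λ`, which is the formula for `x_L`.
Given these formulas the rows of `L₁` hold automatically, and a row `i ∈ L₂` holds iff
`b'_i = λ` or `A'_{ij} = λ` for some `j` with `z_j ≥ λ`. This is the covering condition; a
minimal subcover of `{j : λ ≤ x_j}` with `v = x` gives `z = x`.
-/

section MaxMinAlgebra

variable {ι α β γ δ : Type*}

lemma exists_le_of_le_iSup [Fintype ι] {f : ι → B} {c : B} (hc : 0 < c)
    (h : c ≤ ⨆ i, f i) : ∃ i, c ≤ f i := by
  rw [← Finset.sup_univ_eq_iSup, Finset.le_sup_iff hc] at h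
  simpa using h

lemma le_mmVec (A : Matrix α β B) (x : β → B) (i : α) (j : β) :
    A i j ⊓ x j ≤ mmVec A x i :=
  le_iSup (fun j => A i j ⊓ x j) j

lemma mmVec_mono (A : Matrix α β B) {x y : β → B} (h : x ≤ y) : mmVec A x ≤ mmVec A y :=
  fun _ => iSup_mono fun j => inf_le_inf_left _ (h j)

lemma mmVec_mono_left {A A' : Matrix α β B} (h : ∀ i j, A i j ≤ A' i j) (x : β → B) :
    mmVec A x ≤ mmVec A' x :=
  fun i => iSup_mono fun j => inf_le_inf_right _ (h i j)

lemma mmVec_mmMul (A : Matrix α β B) (C : Matrix β γ B) (x : γ → B) :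
    mmVec (mmMul A C) x = mmVec A (mmVec C x) := by
  funext i
  simp only [mmVec, mmMul, iSup_inf_eq, inf_iSup_eq, inf_assoc]
  exact iSup_comm

lemma mmMul_assoc (A : Matrix α β B) (C : Matrix β γ B) (D : Matrix γ δ B) :
    mmMul (mmMul A C) D = mmMul A (mmMul C D) := by
  funext i l
  exact congrFun (mmVec_mmMul A C (fun k => D k l)) i

lemma mmVec_sup (A : Matrix α β B) (x y : β → B) :
    mmVec A (x ⊔ y) = mmVec A x ⊔ mmVec A y := by
  funext i
  simp only [mmVec, Pi.sup_apply, inf_sup_left]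
  exact iSup_sup_eq

lemma mmVec_inf_left (A : Matrix α β B) (x : β → B) (c : B) (i : α) :
    mmVec A (fun j => c ⊓ x j) i = c ⊓ mmVec A x i := by
  simp only [mmVec, inf_iSup_eq, inf_left_comm c]

lemma mmVec_mmId [DecidableEq α] (x : α → B) : mmVec (mmId α) x = x := by
  funext i
  refine le_antisymm (iSup_le fun j => ?_) ?_
  · by_cases h : i = j
    · subst h; exact inf_le_right
    · simp [mmId, h]
  · calc x i = mmId α i i ⊓ x i := by
          simp only [mmId, if_true]; exact (inf_eq_right.2 le_top).symm
      _ ≤ mmVec (mmId α) x i := le_mmVec _ x i i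

lemma iSup_subtype_union [DecidableEq α] {P Q : Finset α} (f : ↥(P ∪ Q) → B) :
    ⨆ j, f j = (⨆ j : ↥P, f ⟨j, Finset.mem_union_left Q j.2⟩) ⊔
      ⨆ j : ↥Q, f ⟨j, Finset.mem_union_right P j.2⟩ := by
  refine le_antisymm (iSup_le fun j => ?_)
    (sup_le (iSup_le fun j => le_iSup f _) (iSup_le fun j => le_iSup f _))
  rcases Finset.mem_union.1 j.2 with h | h
  · exact le_sup_of_le_left (le_iSup_of_le ⟨j, h⟩ le_rfl)
  · exact le_sup_of_le_right (le_iSup_of_le ⟨j, h⟩ le_rfl)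

lemma iSup_eq_sup_of_union_eq_univ [Fintype α] [DecidableEq α] {P Q : Finset α}
    (hPQ : P ∪ Q = Finset.univ) (f : α → B) :
    ⨆ j, f j = (⨆ j : ↥P, f j) ⊔ ⨆ j : ↥Q, f j := by
  refine le_antisymm (iSup_le fun j => ?_)
    (sup_le (iSup_le fun j => le_iSup f _) (iSup_le fun j => le_iSup f _))
  rcases Finset.mem_union.1 (hPQ ▸ Finset.mem_univ j) with h | h
  · exact le_sup_of_le_left (le_iSup_of_le (⟨j, h⟩ : ↥P) le_rfl)
  · exact le_sup_of_le_right (le_iSup_of_le (⟨j, h⟩ : ↥Q) le_rfl)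

lemma eq_of_sup_eq_of_lt {a b c : B} (h : a ⊔ b = c) (hb : b < c) : a = c :=
  ((max_eq_iff.1 h).resolve_right fun h' => hb.ne h'.1).1

end MaxMinAlgebra

lemma exists_minimal_subcover {γ ι : Type*} (C : γ → Set ι) {I : Set ι} {W₀ : Finset γ}
    (hC : ∀ j, C j ⊆ I) (hcov : I ⊆ ⋃ j ∈ W₀, C j) :
    ∃ W ⊆ W₀, I = ⋃ j ∈ W, C j ∧ ∀ V ⊆ W, V ≠ W → I ≠ ⋃ j ∈ V, C j := by
  classical
  obtain ⟨W, hWW₀, hW, hWmin⟩ := Finset.exists_le_minimal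
    (W₀.powerset.filter fun W => I ⊆ ⋃ j ∈ W, C j)
    (Finset.mem_filter.2 ⟨Finset.mem_powerset_self W₀, hcov⟩)
  obtain ⟨-, hWcov⟩ := Finset.mem_filter.1 hW
  refine ⟨W, hWW₀, hWcov.antisymm (Set.iUnion₂_subset fun j _ => hC j),
    fun V hVW hne hV => hne ?_⟩
  exact hVW.antisymm (hWmin (Finset.mem_filter.2
    ⟨Finset.mem_powerset.2 (hVW.trans hWW₀), hV.le⟩) hVW)

/-- The vector `z = z^W ⊕ Λ^W ⊗ v` of the theorem. -/
def zVec {γ : Type*} [DecidableEq γ] (lam : B) (W : Finset γ) (v : γ → B) : γ → B :=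
  fun j => (if j ∈ W then lam else 0) ⊔
    mmVec (fun p q : γ => if p = q then 1 else if p ∈ W then lam else 0) v j

lemma lam_le_zVec {γ : Type*} [DecidableEq γ] {lam : B} {W : Finset γ} {j : γ} (hj : j ∈ W)
    (v : γ → B) : lam ≤ zVec lam W v j :=
  le_sup_of_le_left (if_pos hj).ge

lemma zVec_eq_self {γ : Type*} [DecidableEq γ] {lam : B} {W : Finset γ} {v : γ → B}
    (hv : ∀ j ∈ W, lam ≤ v j) : zVec lam W v = v := by
  funext j
  refine le_antisymm (sup_le ?_ (iSup_le fun q => ?_)) (le_sup_of_le_right ?_)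
  · split_ifs with hj
    exacts [hv j hj, bot_le]
  · dsimp only
    split_ifs with hjq hj
    · exact hjq ▸ inf_le_right
    · exact inf_le_left.trans (hv j hj)
    · exact inf_le_left.trans bot_le
  · refine le_trans ?_ (le_mmVec _ v j j)
    simp only [if_true]
    exact le_inf le_top le_rfl

section Walks

variable {α : Type*}

def IsHeavyWalk (A : Matrix α α B) (c : B) (p : ℕ → α) (t : ℕ) : Prop :=
  ∀ s < t, c ≤ A (p s) (p (s + 1))

namespace IsHeavyWalk

variable {A : Matrix α α B} {c : B} {p : ℕ → α} {t : ℕ}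

lemma mono (h : IsHeavyWalk A c p t) {t' : ℕ} (ht : t' ≤ t) : IsHeavyWalk A c p t' :=
  fun s hs => h s (hs.trans_le ht)

lemma shift (h : IsHeavyWalk A c p t) (s : ℕ) : IsHeavyWalk A c (fun r => p (s + r)) (t - s) :=
  fun r hr => h (s + r) (by omega)

lemma cons (h : IsHeavyWalk A c p t) {i : α} (hi : c ≤ A i (p 0)) :
    IsHeavyWalk A c (fun s => Nat.casesOn s i p) (t + 1)
  | 0, _ => hi
  | s + 1, hs => h s (Nat.lt_of_succ_lt_succ hs)

lemma snoc (h : IsHeavyWalk A c p t) {j : α} (hj : c ≤ A (p t) j) :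
    IsHeavyWalk A c (fun s => if s ≤ t then p s else j) (t + 1) := by
  intro s hs
  rcases Nat.lt_succ_iff_lt_or_eq.1 hs with hs | rfl
  · simpa [hs.le, Nat.succ_le_of_lt hs] using h s hs
  · simpa using hj

/-- Cutting out the closed subwalk between two visits `s < u` of the same vertex. -/
lemma exists_cut (h : IsHeavyWalk A c p t) {s u : ℕ} (hsu : s < u) (hut : u ≤ t)
    (heq : p s = p u) :
    ∃ q : ℕ → α, q 0 = p 0 ∧ q (t - (u - s)) = p t ∧
      IsHeavyWalk A c q (t - (u - s)) := by
  refine ⟨fun r => if r < s then p r else p (r + (u - s)), ?_, ?_, fun r hr => ?_⟩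
  · rcases Nat.eq_zero_or_pos s with rfl | hs
    · simp [heq]
    · simp [hs]
  · simp [show ¬ t - (u - s) < s by omega, show t - (u - s) + (u - s) = t by omega]
  · by_cases hr1 : r + 1 < s
    · simpa [hr1, show r < s by omega] using h r (by omega)
    · by_cases hrs : r < s
      · obtain rfl : s = r + 1 := by omega
        have hu : r + 1 + (u - (r + 1)) = u := by omega
        simpa [hu, ← heq] using h r (by omega)
      · simpa [hrs, hr1, show r + (u - s) + 1 = r + 1 + (u - s) by omega] using
          h (r + (u - s)) (by omega)

end IsHeavyWalk

lemma exists_lt_le_card_eq [Fintype α] (p : ℕ → α) :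
    ∃ s u, s < u ∧ u ≤ Fintype.card α ∧ p s = p u := by
  obtain ⟨r₁, r₂, hne, heq⟩ :=
    Fintype.exists_ne_map_eq_of_card_lt (fun r : Fin (Fintype.card α + 1) => p r) (by simp)
  rcases hne.lt_or_gt with h | h
  · exact ⟨r₁, r₂, h, by omega, heq⟩
  · exact ⟨r₂, r₁, h, by omega, heq.symm⟩

variable [DecidableEq α] {A : Matrix α α B} {c : B}

lemma IsHeavyWalk.le_mmPow {p : ℕ → α} {t : ℕ} (h : IsHeavyWalk A c p t) :
    c ≤ mmPow A t (p 0) (p t) := by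
  induction t generalizing p with
  | zero => simp only [mmPow, mmId, if_true]; exact le_top
  | succ t ih =>
    have htail : c ≤ mmPow A t (p 1) (p (t + 1)) :=
      ih (p := fun s => p (s + 1)) fun s hs => h (s + 1) (by omega)
    exact (le_inf (h 0 t.succ_pos) htail).trans
      (le_iSup (fun j => A (p 0) j ⊓ mmPow A t j (p (t + 1))) (p 1))

lemma exists_isHeavyWalk_of_le_mmPow [Fintype α] (hc : 0 < c) {t : ℕ} {i j : α}
    (h : c ≤ mmPow A t i j) :
    ∃ p : ℕ → α, p 0 = i ∧ p t = j ∧ IsHeavyWalk A c p t := by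
  induction t generalizing i with
  | zero =>
    have : i = j := by
      by_contra hij
      simp only [mmPow, mmId, if_neg hij] at h
      exact absurd h (not_le.2 hc)
    exact ⟨fun _ => i, rfl, this, fun s hs => absurd hs (Nat.not_lt_zero s)⟩
  | succ t ih =>
    obtain ⟨k, hk⟩ := exists_le_of_le_iSup hc h
    obtain ⟨p, rfl, rfl, hp⟩ := ih (le_inf_iff.1 hk).2
    exact ⟨_, rfl, rfl, hp.cons (le_inf_iff.1 hk).1⟩

end Walks

section StarClosure

variable {α : Type*} [DecidableEq α] {A : Matrix α α B}

lemma mmVec_mmPow_le {b x : α → B} (hb : b ≤ x) (hx : mmVec A x ≤ x) (t : ℕ) :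
    mmVec (mmPow A t) b ≤ x := by
  induction t with
  | zero => exact (mmVec_mmId b).le.trans hb
  | succ t ih => exact (mmVec_mmMul A (mmPow A t) b).le.trans ((mmVec_mono A ih).trans hx)

variable [Fintype α]

lemma exists_lt_le_mmPow {c : B} (hc : 0 < c) {t : ℕ} (ht : Fintype.card α ≤ t) {i j : α}
    (h : c ≤ mmPow A t i j) :
    ∃ t', t - Fintype.card α ≤ t' ∧ t' < t ∧ c ≤ mmPow A t' i j := by
  obtain ⟨p, rfl, rfl, hp⟩ := exists_isHeavyWalk_of_le_mmPow hc h
  obtain ⟨s, u, hsu, hu, heq⟩ := exists_lt_le_card_eq p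
  obtain ⟨q, hq0, hqt, hq⟩ := hp.exists_cut hsu (hu.trans ht) heq
  exact ⟨t - (u - s), by omega, by omega, hq0 ▸ hqt ▸ hq.le_mmPow⟩

lemma mmPow_le_mmStar (t : ℕ) (i j : α) : mmPow A t i j ≤ mmStar A i j := by
  induction t using Nat.strong_induction_on with
  | _ t ih =>
    by_cases ht : t < Fintype.card α
    · exact le_biSup (fun t => mmPow A t i j) (Finset.mem_range.2 ht)
    rcases eq_bot_or_bot_lt (mmPow A t i j) with h0 | hpos
    · exact h0 ▸ bot_le
    obtain ⟨t', -, ht', h⟩ := exists_lt_le_mmPow hpos (not_lt.1 ht) le_rfl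
    exact h.trans (ih t' ht')

lemma mmPow_le_mmPlus {t : ℕ} (ht : 1 ≤ t) (i j : α) : mmPow A t i j ≤ mmPlus A i j := by
  induction t using Nat.strong_induction_on with
  | _ t ih =>
    by_cases ht' : t ≤ Fintype.card α
    · exact le_biSup (fun t => mmPow A t i j) (Finset.mem_Icc.2 ⟨ht, ht'⟩)
    rcases eq_bot_or_bot_lt (mmPow A t i j) with h0 | hpos
    · exact h0 ▸ bot_le
    obtain ⟨t', ht'', ht't, h⟩ := exists_lt_le_mmPow hpos (by omega) le_rfl
    exact h.trans (ih t' ht't (by omega))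

lemma mmMul_mmStar (A : Matrix α α B) : mmMul A (mmStar A) = mmPlus A := by
  funext i j
  apply le_antisymm
  · refine iSup_le fun k => ?_
    simp only [mmStar, inf_iSup_eq]
    refine iSup₂_le fun t _ => ?_
    exact (le_iSup (fun k => A i k ⊓ mmPow A t k j) k).trans (mmPow_le_mmPlus t.succ_pos i j)
  · refine iSup₂_le fun t ht => ?_
    obtain ⟨t, rfl⟩ := Nat.exists_eq_add_of_le' (Finset.mem_Icc.1 ht).1
    exact iSup_mono fun k => inf_le_inf_left _ (mmPow_le_mmStar t k j)

lemma mmStar_eq_mmId_sup_mmPlus (A : Matrix α α B) (i j : α) :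
    mmStar A i j = mmId α i j ⊔ mmPlus A i j := by
  have : Nonempty α := ⟨i⟩
  refine le_antisymm (iSup₂_le fun t _ => ?_)
    (sup_le ?_ (iSup₂_le fun t _ => mmPow_le_mmStar t i j))
  · cases t with
    | zero => exact le_sup_left
    | succ t => exact le_sup_of_le_right (mmPow_le_mmPlus t.succ_pos i j)
  · exact le_biSup (fun t => mmPow A t i j) (Finset.mem_range.2 Fintype.card_pos)

lemma mmMul_mmStarLam (A : Matrix α α B) (lam : B) :
    mmMul A (mmStarLam A lam) = mmStarLam A lam := by
  funext k i
  have h : mmMul A (mmStarLam A lam) k i = lam ⊓ mmPlus A i i ⊓ mmMul A (mmStar A) k i := by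
    simp only [mmMul, mmStarLam, inf_iSup_eq, inf_left_comm (A k _)]
  rw [h, mmMul_mmStar, mmStarLam, mmStar_eq_mmId_sup_mmPlus]
  by_cases hki : k = i
  · subst hki
    simp [mmId]
  · simp [mmId, hki]

lemma mmVec_mmStar_eq (A : Matrix α α B) (b : α → B) :
    mmVec (mmStar A) b = b ⊔ mmVec (mmPlus A) b := by
  funext k
  have hid := congrFun (mmVec_mmId b) k
  simp only [mmVec] at hid ⊢
  simp only [mmStar_eq_mmId_sup_mmPlus, inf_sup_right, iSup_sup_eq, hid, Pi.sup_apply]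
  rfl

lemma mmVec_mmStar_le {b x : α → B} (hb : b ≤ x) (hx : mmVec A x ≤ x) :
    mmVec (mmStar A) b ≤ x := by
  intro k
  refine iSup_le fun j => ?_
  simp only [mmStar, iSup_inf_eq]
  exact iSup₂_le fun t _ => (le_mmVec _ b k j).trans (mmVec_mmPow_le hb hx t k)

lemma mmVec_mmStarLam_le {x : α → B} (hx : mmVec A x ≤ x) (lam : B) :
    mmVec (mmStarLam A lam) x ≤ x :=
  (mmVec_mono_left (fun _ _ => inf_le_right) x).trans (mmVec_mmStar_le le_rfl hx)

/-- Starting from `k`, follow edges of weight `≥ x k` into vertices where `x ≥ x k`; either the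
walk meets `b ≥ x k` (a term of `A* ⊗ b`) or within `|α|` steps it closes a cycle, which
together with `x k ≤ λ` produces a term of `A*_λ ⊗ x`. -/
lemma le_mmVec_mmStar_sup_mmStarLam {lam : B} {b x : α → B} (hxlam : ∀ i, x i ≤ lam)
    (hx : x ≤ mmVec A x ⊔ b) (k : α) :
    x k ≤ mmVec (mmStar A) b k ⊔ mmVec (mmStarLam A lam) x k := by
  rcases eq_bot_or_bot_lt (x k) with h0 | hc
  · exact h0 ▸ bot_le
  by_contra hlt
  have hb : ¬ x k ≤ mmVec (mmStar A) b k := fun h => hlt (le_sup_of_le_left h)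
  have walk : ∀ t ≤ Fintype.card α, ∃ p : ℕ → α,
      p 0 = k ∧ IsHeavyWalk A (x k) p t ∧ ∀ s ≤ t, x k ≤ x (p s) := by
    intro t
    induction t with
    | zero =>
      exact fun _ => ⟨fun _ => k, rfl, fun s hs => absurd hs s.not_lt_zero, fun _ _ => le_rfl⟩
    | succ t ih =>
      intro ht
      obtain ⟨p, hp0, hp, hxp⟩ := ih (by omega)
      have hbt : ¬ x k ≤ b (p t) := fun h => hb <|
        (le_inf (hp0 ▸ hp.le_mmPow.trans (mmPow_le_mmStar t _ _)) h).trans (le_mmVec _ b k (p t))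
      obtain ⟨j, hj⟩ := exists_le_of_le_iSup hc
        ((le_sup_iff.1 ((hxp t le_rfl).trans (hx (p t)))).resolve_right hbt)
      refine ⟨fun s => if s ≤ t then p s else j, by simp [hp0], hp.snoc (le_inf_iff.1 hj).1,
        fun s _ => ?_⟩
      by_cases hst : s ≤ t
      · simpa [hst] using hxp s hst
      · simpa [hst] using (le_inf_iff.1 hj).2
  obtain ⟨p, hp0, hp, hxp⟩ := walk _ le_rfl
  obtain ⟨s, u, hsu, hu, heq⟩ := exists_lt_le_card_eq p
  have hstar : x k ≤ mmStar A k (p s) :=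
    hp0 ▸ (hp.mono (hsu.le.trans hu)).le_mmPow.trans (mmPow_le_mmStar s _ _)
  have hplus : x k ≤ mmPlus A (p s) (p s) := by
    have h := ((hp.shift s).mono (show u - s ≤ Fintype.card α - s by omega)).le_mmPow
    simp only [Nat.add_zero, show s + (u - s) = u by omega, ← heq] at h
    exact h.trans (mmPow_le_mmPlus (by omega) _ _)
  refine hlt (le_sup_of_le_right ?_)
  exact (le_inf (le_inf (le_inf (hxlam k) hplus) hstar) (hxp s (by omega))).trans
    (le_mmVec (mmStarLam A lam) x k (p s))

lemma eq_mmStar_sup_mmStarLam {lam : B} {b x : α → B} (hxlam : ∀ i, x i ≤ lam)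
    (hx : x = mmVec A x ⊔ b) :
    x = mmVec (mmStar A) b ⊔ mmVec (mmStarLam A lam) x :=
  le_antisymm (le_mmVec_mmStar_sup_mmStarLam hxlam hx.le)
    (sup_le (mmVec_mmStar_le (le_sup_right.trans hx.ge) (le_sup_left.trans hx.ge))
      (mmVec_mmStarLam_le (le_sup_left.trans hx.ge) lam))

lemma mmVec_mmStar_sup_mmStarLam_eq (lam : B) (b u : α → B) :
    mmVec A (mmVec (mmStar A) b ⊔ mmVec (mmStarLam A lam) u) ⊔ b =
      mmVec (mmStar A) b ⊔ mmVec (mmStarLam A lam) u := by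
  rw [mmVec_sup, ← mmVec_mmMul, ← mmVec_mmMul, mmMul_mmStar, mmMul_mmStarLam,
    mmVec_mmStar_eq, sup_right_comm, sup_comm b]

end StarClosure

section Partition

variable {n : ℕ}

def restrictLtil (A : Matrix (Fin n) (Fin n) B) (lam : B) (K L : Finset (Fin n))
    (z : ↥(NtilSet A lam K L) → B) : ↥(LtilSet A lam K L) → B :=
  fun j => z ⟨j, Finset.mem_union_left K j.2⟩

def restrictK (A : Matrix (Fin n) (Fin n) B) (lam : B) (K L : Finset (Fin n))
    (z : ↥(NtilSet A lam K L) → B) : ↥K → B :=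
  fun j => z ⟨j, Finset.mem_union_right _ j.2⟩

def HasLForm (A : Matrix (Fin n) (Fin n) B) (lam : B) (K L : Finset (Fin n)) (x : Fin n → B)
    (zt : ↥(LtilSet A lam K L) → B) : Prop :=
  ∀ ℓ : ↥L, x ℓ = lam ⊔ mmVec (LamSub lam L (LtilSet A lam K L)) zt ℓ

def HasKForm (A : Matrix (Fin n) (Fin n) B) (lam : B) (K L : Finset (Fin n)) (x : Fin n → B)
    (zt : ↥(LtilSet A lam K L) → B) (zK : ↥K → B) : Prop :=
  ∀ i : ↥K, x i =
    (lam ⊓ mmVec (mmMul (mmStar (subM A K K)) (subM A K L)) (fun _ => 1) i) ⊔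
    mmVec (mmMul (mmMul (mmStar (subM A K K)) (subM A K (LtilSet A lam K L)))
      (LamSub lam (LtilSet A lam K L) (LtilSet A lam K L))) zt i ⊔
    mmVec (mmStarLam (subM A K K) lam) zK i

variable {A : Matrix (Fin n) (Fin n) B} {lam : B} {K L : Finset (Fin n)}

lemma LtilSet_subset : LtilSet A lam K L ⊆ L := Finset.sdiff_subset

lemma mmMul_mmStar_subM_Ltil_le (i : ↥K) (j : ↥(LtilSet A lam K L)) :
    mmMul (mmStar (subM A K K)) (subM A K (LtilSet A lam K L)) i j ≤ lam := by
  have hj := Finset.mem_sdiff.1 j.2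
  have hK : (j : Fin n) ∉ LgtKset A lam K L := fun h => hj.2 (Finset.mem_union_right _ h)
  simp only [LgtKset, Finset.mem_filter, not_and, not_lt] at hK
  exact (le_iSup (fun k : ↥K =>
    mmMul (mmStar (subM A K K)) (fun (p : ↥K) (q : Fin n) => A p q) k j) i).trans (hK hj.1)

lemma mmMul_mmMul_LamSub_le (i : ↥K) (j : ↥(LtilSet A lam K L)) :
    mmMul (mmMul (mmStar (subM A K K)) (subM A K (LtilSet A lam K L)))
      (LamSub lam (LtilSet A lam K L) (LtilSet A lam K L)) i j ≤ lam := by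
  refine iSup_le fun ℓ => ?_
  by_cases h : (ℓ : Fin n) = j
  · exact inf_le_left.trans (mmMul_mmStar_subM_Ltil_le i ℓ)
  · exact inf_le_right.trans (by simp [LamSub, h])

lemma Aprime_apply_Ltil (i : ↥(L2set A lam L)) (j : ↥(LtilSet A lam K L)) :
    Aprime A lam K L i ⟨j, Finset.mem_union_left K j.2⟩ = mmMul (subM A (L2set A lam L) K)
      (mmMul (mmMul (mmStar (subM A K K)) (subM A K (LtilSet A lam K L)))
        (LamSub lam (LtilSet A lam K L) (LtilSet A lam K L))) i j := by
  simp only [Aprime, dif_pos j.2, mmMul_assoc]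

lemma Aprime_apply_K (hD : Disjoint K L) (i : ↥(L2set A lam L)) (j : ↥K) :
    Aprime A lam K L i ⟨j, Finset.mem_union_right _ j.2⟩ =
      mmMul (subM A (L2set A lam L) K) (mmStarLam (subM A K K) lam) i j := by
  have hj : (j : Fin n) ∉ LtilSet A lam K L := fun h =>
    Finset.disjoint_left.1 hD j.2 (LtilSet_subset h)
  simp only [Aprime, dif_neg hj]

lemma Aprime_le (i : ↥(L2set A lam L)) (j : ↥(NtilSet A lam K L)) :
    Aprime A lam K L i j ≤ lam := by
  unfold Aprime
  split
  · rw [mmMul_assoc (mmMul _ _), mmMul_assoc, ← mmMul_assoc (mmStar _)]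
    exact iSup_le fun k => inf_le_right.trans (mmMul_mmMul_LamSub_le k _)
  · exact iSup_le fun k => inf_le_right.trans (inf_le_left.trans inf_le_left)

lemma mmVec_LamSub_le_of_not_mem (zt : ↥(LtilSet A lam K L) → B) (ℓ : ↥L)
    (hℓ : (ℓ : Fin n) ∉ LtilSet A lam K L) :
    mmVec (LamSub lam L (LtilSet A lam K L)) zt ℓ ≤ lam :=
  iSup_le fun j => inf_le_left.trans <| by
    have : (ℓ : Fin n) ≠ j := fun he => hℓ (he ▸ j.2)
    simp [LamSub, this]

end Partition

section Forms

variable {n : ℕ} {A : Matrix (Fin n) (Fin n) B} {lam : B} {K L : Finset (Fin n)}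
  {x : Fin n → B}

namespace HasLForm

variable {zt : ↥(LtilSet A lam K L) → B}

lemma lam_le (h : HasLForm A lam K L x zt) (ℓ : ↥L) : lam ≤ x ℓ := by
  rw [h ℓ]
  exact le_sup_left

lemma eq_lam_of_not_mem (h : HasLForm A lam K L x zt) (ℓ : ↥L)
    (hℓ : (ℓ : Fin n) ∉ LtilSet A lam K L) : x ℓ = lam := by
  rw [h ℓ]
  exact sup_eq_left.2 (mmVec_LamSub_le_of_not_mem zt ℓ hℓ)

/-- Only the columns `ℓ ∈ L̃` of `(A_{KK})* ⊗ A_{KL} ⊗ Λ_{L,L̃}` can exceed `λ`; the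
others are absorbed by the constant term. -/
lemma mmVec_mmStar_mmVec_eq (h : HasLForm A lam K L x zt) (i : ↥K) :
    mmVec (mmStar (subM A K K)) (mmVec (subM A K L) fun ℓ => x ℓ) i =
      (lam ⊓ mmVec (mmMul (mmStar (subM A K K)) (subM A K L)) (fun _ => 1) i) ⊔
      mmVec (mmMul (mmMul (mmStar (subM A K K)) (subM A K (LtilSet A lam K L)))
        (LamSub lam (LtilSet A lam K L) (LtilSet A lam K L))) zt i := by
  set S := mmStar (subM A K K)
  set G := mmMul (mmMul S (subM A K (LtilSet A lam K L)))
    (LamSub lam (LtilSet A lam K L) (LtilSet A lam K L))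
  set M := mmMul (mmMul S (subM A K L)) (LamSub lam L (LtilSet A lam K L))
  set c := lam ⊓ mmVec (mmMul S (subM A K L)) (fun _ => 1) i
  have hxL : (fun ℓ : ↥L => x ℓ) =
      (fun _ => lam) ⊔ mmVec (LamSub lam L (LtilSet A lam K L)) zt :=
    funext h
  have hconst : mmVec S (mmVec (subM A K L) fun _ => lam) i = c := by
    rw [← mmVec_mmMul, show c = _ ⊓ _ from rfl, ← mmVec_inf_left]
    congr 1
    funext
    exact (inf_eq_left.2 le_top).symm
  rw [hxL, mmVec_sup, mmVec_sup, Pi.sup_apply, hconst, ← mmVec_mmMul, ← mmVec_mmMul]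
  have hMG : ∀ j, M i j ≤ c ⊔ G i j := fun j => iSup_le fun ℓ => by
    by_cases hℓ : (ℓ : Fin n) ∈ LtilSet A lam K L
    · exact le_sup_of_le_right (le_iSup_of_le (⟨ℓ, hℓ⟩ : ↥(LtilSet A lam K L)) le_rfl)
    · have hne : (ℓ : Fin n) ≠ j := fun he => hℓ (he ▸ j.2)
      refine le_sup_of_le_left (le_inf (inf_le_right.trans (by simp [LamSub, hne])) ?_)
      exact inf_le_left.trans ((le_inf le_rfl le_top).trans (le_mmVec _ (fun _ => 1) i ℓ))
  have hGM : ∀ i j, G i j ≤ M i j := fun _ _ => iSup_le fun ℓ =>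
    le_iSup_of_le (⟨ℓ, LtilSet_subset ℓ.2⟩ : ↥L) le_rfl
  refine le_antisymm (sup_le le_sup_left (iSup_le fun j => ?_))
    (sup_le_sup_left (mmVec_mono_left hGM zt i) c)
  calc M i j ⊓ zt j ≤ (c ⊔ G i j) ⊓ zt j := inf_le_inf_right _ (hMG j)
    _ ≤ c ⊔ G i j ⊓ zt j := by rw [inf_sup_right]; exact sup_le_sup_right inf_le_left _
    _ ≤ c ⊔ mmVec G zt i := sup_le_sup_left (le_mmVec G zt i j) c

end HasLForm


lemma HasKForm.le_lam {zt : ↥(LtilSet A lam K L) → B} {zK : ↥K → B}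
    (h : HasKForm A lam K L x zt zK) (i : ↥K) : x i ≤ lam := by
  rw [h i]
  refine sup_le (sup_le inf_le_left (iSup_le fun j => ?_)) (iSup_le fun j => ?_)
  · exact inf_le_left.trans (mmMul_mmMul_LamSub_le i j)
  · exact inf_le_left.trans (inf_le_left.trans inf_le_left)

lemma HasKForm.mmVec_L2set_eq (hD : Disjoint K L) {z : ↥(NtilSet A lam K L) → B}
    (h : HasKForm A lam K L x (restrictLtil A lam K L z) (restrictK A lam K L z))
    (i : ↥(L2set A lam L)) :
    mmVec (subM A (L2set A lam L) K) (fun j => x j) i =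
      bprime A lam K L i ⊔ ⨆ j, Aprime A lam K L i j ⊓ z j := by
  have hxK : (fun j : ↥K => x j) =
      (fun j => lam ⊓ mmVec (mmMul (mmStar (subM A K K)) (subM A K L)) (fun _ => 1) j) ⊔
      mmVec (mmMul (mmMul (mmStar (subM A K K)) (subM A K (LtilSet A lam K L)))
        (LamSub lam (LtilSet A lam K L) (LtilSet A lam K L))) (restrictLtil A lam K L z) ⊔
      mmVec (mmStarLam (subM A K K) lam) (restrictK A lam K L z) :=
    funext h
  rw [hxK, mmVec_sup, mmVec_sup, show (⨆ j, Aprime A lam K L i j ⊓ z j) = _ from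
    iSup_subtype_union (P := LtilSet A lam K L) (Q := K) fun j => Aprime A lam K L i j ⊓ z j]
  simp only [Pi.sup_apply, sup_assoc]
  congr 1
  · simp only [bprime, mmVec_inf_left, mmVec_mmMul]
  congr 1
  · rw [← mmVec_mmMul]
    exact iSup_congr fun j =>
      congrArg (· ⊓ restrictLtil A lam K L z j) (Aprime_apply_Ltil i j).symm
  · rw [← mmVec_mmMul]
    exact iSup_congr fun j =>
      congrArg (· ⊓ restrictK A lam K L z j) (Aprime_apply_K hD i j).symm


lemma HasKForm.eq_mmStar_sup {zt : ↥(LtilSet A lam K L) → B} {zK : ↥K → B}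
    (hL : HasLForm A lam K L x zt) (hK : HasKForm A lam K L x zt zK) :
    (fun i : ↥K => x i) = mmVec (mmStar (subM A K K)) (mmVec (subM A K L) fun ℓ => x ℓ) ⊔
      mmVec (mmStarLam (subM A K K) lam) zK :=
  funext fun i => by rw [hK i, Pi.sup_apply, hL.mmVec_mmStar_mmVec_eq i]

lemma le_iSup_inf_of_le_biSup (hL : ∀ ℓ ∈ L, lam ≤ x ℓ) {i : Fin n}
    (hi : lam ≤ ⨆ j ∈ L, A i j) : lam ≤ ⨆ j : ↥L, A i j ⊓ x j := by
  calc lam = ⨆ j ∈ L, lam ⊓ A i j := by rw [← inf_iSup₂_eq, inf_eq_left.2 hi]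
    _ ≤ ⨆ j : ↥L, A i j ⊓ x j := iSup₂_le fun j hj =>
      le_iSup_of_le (⟨j, hj⟩ : ↥L) (by rw [inf_comm]; exact inf_le_inf_left _ (hL j hj))

variable {z : ↥(NtilSet A lam K L) → B}

lemma isKLEig_of_hasForms (hU : K ∪ L = Finset.univ) (hD : Disjoint K L)
    (hL : HasLForm A lam K L x (restrictLtil A lam K L z))
    (hK : HasKForm A lam K L x (restrictLtil A lam K L z) (restrictK A lam K L z))
    (hcov : ∀ i, bprime A lam K L i < lam → ∃ j, Aprime A lam K L i j = lam ∧ lam ≤ z j) :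
    IsKLEig A lam K L x := by
  have hxK : ∀ i ∈ K, x i ≤ lam := fun i hi => hK.le_lam ⟨i, hi⟩
  have hxL : ∀ i ∈ L, lam ≤ x i := fun i hi => hL.lam_le ⟨i, hi⟩
  have hKle : ∀ i, (⨆ j : ↥K, A i j ⊓ x j) ≤ lam := fun i =>
    iSup_le fun j => inf_le_right.trans (hxK j j.2)
  refine ⟨funext fun i => ?_, hxK, hxL⟩
  rw [mmVec, iSup_eq_sup_of_union_eq_univ hU]
  rcases Finset.mem_union.1 (hU ▸ Finset.mem_univ i) with hi | hi
  · -- rows in `K`: `x_K = S ⊗ b ⊕ S_λ ⊗ z_K` solves `x_K = A_{KK} ⊗ x_K ⊕ b`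
    rw [inf_eq_right.2 (hxK i hi)]
    have h := congrFun (mmVec_mmStar_sup_mmStarLam_eq (A := subM A K K) lam
      (mmVec (subM A K L) fun ℓ => x ℓ) (restrictK A lam K L z)) ⟨i, hi⟩
    rwa [← hK.eq_mmStar_sup hL] at h
  rw [inf_eq_left.2 (hxL i hi)]
  by_cases hi₁ : lam ≤ ⨆ j ∈ L, A i j
  · refine le_antisymm (sup_le (hKle i) (iSup_le fun j => ?_))
      (le_sup_of_le_right (le_iSup_inf_of_le_biSup hxL hi₁))
    by_cases hA : A i j ≤ lam
    · exact inf_le_left.trans hA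
    have hj : (j : Fin n) ∉ LtilSet A lam K L := fun hj => (Finset.mem_sdiff.1 hj).2 <|
      Finset.mem_union_left _ <| Finset.mem_filter.2 ⟨j.2, (not_le.1 hA).trans_le <|
        le_biSup (fun i' => A i' j) (Finset.mem_filter.2 ⟨hi, hi₁⟩)⟩
    exact inf_le_right.trans (hL.eq_lam_of_not_mem j hj).le
  · have hiL₂ : i ∈ L2set A lam L := Finset.mem_filter.2 ⟨hi, not_le.1 hi₁⟩
    have hLle : (⨆ j : ↥L, A i j ⊓ x j) ≤ lam := iSup_le fun j =>
      inf_le_left.trans ((le_biSup (fun j => A i j) j.2).trans (not_le.1 hi₁).le)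
    refine le_antisymm (sup_le (hKle i) hLle) (le_sup_of_le_left ?_)
    change lam ≤ mmVec (subM A (L2set A lam L) K) (fun j => x j) ⟨i, hiL₂⟩
    rw [hK.mmVec_L2set_eq hD]
    rcases lt_or_ge (bprime A lam K L ⟨i, hiL₂⟩) lam with hb | hb
    · obtain ⟨j, hAj, hzj⟩ := hcov _ hb
      exact le_sup_of_le_right (le_iSup_of_le j (le_inf hAj.ge hzj))
    · exact le_sup_of_le_left hb

end Forms

namespace IsKLEig

variable {n : ℕ} {A : Matrix (Fin n) (Fin n) B} {lam : B} {K L : Finset (Fin n)}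
  {x : Fin n → B}

lemma eq_mmVec_sup (hU : K ∪ L = Finset.univ) (h : IsKLEig A lam K L x) :
    (fun i : ↥K => x i) = mmVec (subM A K K) (fun j => x j) ⊔ mmVec (subM A K L) fun j => x j :=
  funext fun i => by
    have hi := congrFun h.1 i
    rw [mmVec, iSup_eq_sup_of_union_eq_univ hU, inf_eq_right.2 (h.2.1 i i.2)] at hi
    exact hi.symm

lemma mmVec_mmStar_mmVec_le (hU : K ∪ L = Finset.univ) (h : IsKLEig A lam K L x) :
    mmVec (mmStar (subM A K K)) (mmVec (subM A K L) fun j => x j) ≤ fun i : ↥K => x i :=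
  mmVec_mmStar_le (le_sup_right.trans (h.eq_mmVec_sup hU).ge)
    (le_sup_left.trans (h.eq_mmVec_sup hU).ge)

lemma eq_lam_of_mem_LprimeSet (hU : K ∪ L = Finset.univ) (h : IsKLEig A lam K L x) (ℓ : ↥L)
    (hℓ : (ℓ : Fin n) ∈ LprimeSet A lam K L) : x ℓ = lam := by
  refine le_antisymm (not_lt.1 fun hlt => ?_) (h.2.2 ℓ ℓ.2)
  rcases Finset.mem_union.1 hℓ with h₁ | h₂
  · obtain ⟨i, -, hi⟩ : ∃ i ∈ L1set A lam L, lam < A i ℓ := by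
      simpa only [lt_iSup_iff, exists_prop] using (Finset.mem_filter.1 h₁).2
    have : A i ℓ ⊓ x ℓ ≤ lam :=
      (le_mmVec A x i ℓ).trans ((congrFun h.1 i).le.trans inf_le_left)
    exact this.not_gt (lt_inf_iff.2 ⟨hi, hlt⟩)
  · obtain ⟨k, hk⟩ := lt_iSup_iff.1 (Finset.mem_filter.1 h₂).2
    have : mmMul (mmStar (subM A K K)) (fun p q => A p q) k ℓ ⊓ x ℓ ≤ lam :=
      calc _ = mmVec (mmStar (subM A K K)) (fun k' => A k' ℓ ⊓ x ℓ) k := by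
            simp only [mmMul, mmVec, iSup_inf_eq, inf_assoc]
        _ ≤ mmVec (mmStar (subM A K K)) (mmVec (subM A K L) fun j => x j) k :=
            mmVec_mono _ (fun k' => le_mmVec (subM A K L) (fun j => x j) k' ℓ) k
        _ ≤ x k := h.mmVec_mmStar_mmVec_le hU k
        _ ≤ lam := h.2.1 k k.2
    exact this.not_gt (lt_inf_iff.2 ⟨hk, hlt⟩)

lemma hasLForm (hU : K ∪ L = Finset.univ) (h : IsKLEig A lam K L x) :
    HasLForm A lam K L x fun j => x j := by
  intro ℓ
  by_cases hℓ : (ℓ : Fin n) ∈ LtilSet A lam K L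
  · refine le_antisymm (le_sup_of_le_right ?_) (sup_le (h.2.2 ℓ ℓ.2) (iSup_le fun j => ?_))
    · refine le_trans ?_ (le_mmVec _ (fun j : ↥(LtilSet A lam K L) => x j) ℓ ⟨ℓ, hℓ⟩)
      simp only [LamSub, if_true]
      exact le_inf le_top le_rfl
    · by_cases he : (ℓ : Fin n) = j
      · exact inf_le_right.trans (he ▸ le_rfl)
      · simp only [LamSub, if_neg he]
        exact inf_le_left.trans (h.2.2 ℓ ℓ.2)
  · rw [h.eq_lam_of_mem_LprimeSet hU ℓ <|
      not_not.1 fun h' => hℓ (Finset.mem_sdiff.2 ⟨ℓ.2, h'⟩)]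
    exact (sup_eq_left.2 (mmVec_LamSub_le_of_not_mem _ ℓ hℓ)).symm

lemma hasKForm (hU : K ∪ L = Finset.univ) (h : IsKLEig A lam K L x) :
    HasKForm A lam K L x (fun j => x j) fun j => x j := by
  have hx := eq_mmStar_sup_mmStarLam (A := subM A K K) (fun i => h.2.1 i i.2) (h.eq_mmVec_sup hU)
  intro i
  refine (congrFun hx i).trans ?_
  rw [Pi.sup_apply, (h.hasLForm hU).mmVec_mmStar_mmVec_eq i]

lemma exists_Aprime_eq (hU : K ∪ L = Finset.univ) (hD : Disjoint K L) (h : IsKLEig A lam K L x)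
    (i : ↥(L2set A lam L)) (hb : bprime A lam K L i < lam) :
    ∃ j, Aprime A lam K L i j = lam ∧ lam ≤ x j := by
  have hiL : (i : Fin n) ∈ L := (Finset.mem_filter.1 i.2).1
  have hrow : (⨆ j : ↥K, A i j ⊓ x j) ⊔ (⨆ j : ↥L, A i j ⊓ x j) = lam := by
    have := congrFun h.1 i
    rwa [mmVec, iSup_eq_sup_of_union_eq_univ hU, inf_eq_left.2 (h.2.2 i hiL)] at this
  have hLlt : (⨆ j : ↥L, A i j ⊓ x j) < lam :=
    (iSup_le fun j => inf_le_left.trans (le_biSup (fun j => A i j) j.2)).trans_lt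
      (Finset.mem_filter.1 i.2).2
  have hK : mmVec (subM A (L2set A lam L) K) (fun j => x j) i = lam :=
    eq_of_sup_eq_of_lt hrow hLlt
  rw [(h.hasKForm hU).mmVec_L2set_eq (z := fun j => x j) hD] at hK
  obtain ⟨j, hj⟩ := exists_le_of_le_iSup (bot_le.trans_lt hb)
    (eq_of_sup_eq_of_lt ((sup_comm _ _).trans hK) hb).ge
  exact ⟨j, (Aprime_le i j).antisymm (le_inf_iff.1 hj).1, (le_inf_iff.1 hj).2⟩

end IsKLEig

/-- **main theorem.** `x` is a `(K,L)` `λ`-eigenvector of `A` iff there are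
a set `W ⊆ Ñ` such that `{C_j : j ∈ W}` is a minimal covering of `I₀` and a vector
`v ∈ B^{|Ñ|}` such that, with `z = z^W ⊕ Λ^W ⊗ v` split into `z_{L̃}` and `z_K`:
`x_L = λ·1_L ⊕ Λ_{L,L̃} ⊗ z_{L̃}` and
`x_K = λ ⊗ (A_{KK})* ⊗ A_{KL} ⊗ 1_L ⊕ (A_{KK})* ⊗ A_{KL̃} ⊗ Λ_{L̃,L̃} ⊗ z_{L̃}`
`⊕ (A_{KK})*_λ ⊗ z_K`. -/
theorem stmt18 {n : ℕ} (A : Matrix (Fin n) (Fin n) B) (lam : B) (K L : Finset (Fin n))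
    (hU : K ∪ L = Finset.univ) (hD : Disjoint K L) (x : Fin n → B) :
    IsKLEig A lam K L x ↔
      ∃ W : Finset ↥(NtilSet A lam K L),
        (I0set A lam K L = ⋃ j ∈ W, CsetKL A lam K L j) ∧
        (∀ V ⊆ W, V ≠ W → I0set A lam K L ≠ ⋃ j ∈ V, CsetKL A lam K L j) ∧
        ∃ v : ↥(NtilSet A lam K L) → B,
          let z : ↥(NtilSet A lam K L) → B := fun j =>
            (if j ∈ W then lam else 0) ⊔
              mmVec (fun p q : ↥(NtilSet A lam K L) =>
                if p = q then 1 else if p ∈ W then lam else 0) v j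
          let zLt : ↥(LtilSet A lam K L) → B := fun j =>
            z ⟨(j : Fin n), show (j : Fin n) ∈ NtilSet A lam K L from
              Finset.mem_union_left K j.2⟩
          let zK : ↥K → B := fun j =>
            z ⟨(j : Fin n), show (j : Fin n) ∈ NtilSet A lam K L from
              Finset.mem_union_right (LtilSet A lam K L) j.2⟩
          (∀ ℓ : ↥L,
            x ℓ = lam ⊔ mmVec (LamSub lam L (LtilSet A lam K L)) zLt ℓ) ∧
          (∀ i : ↥K,
            x i =
              (lam ⊓ mmVec (mmMul (mmStar (subM A K K)) (subM A K L)) (fun _ => 1) i) ⊔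
              mmVec (mmMul (mmMul (mmStar (subM A K K)) (subM A K (LtilSet A lam K L)))
                (LamSub lam (LtilSet A lam K L) (LtilSet A lam K L))) zLt i ⊔
              mmVec (mmStarLam (subM A K K) lam) zK i) := by
  constructor
  · intro h
    obtain ⟨W, hW₀, hWeq, hWmin⟩ := exists_minimal_subcover (CsetKL A lam K L)
      (W₀ := Finset.univ.filter fun j => lam ≤ x j) (fun _ _ hi => hi.1) fun i hi => by
        obtain ⟨j, hAj, hxj⟩ := h.exists_Aprime_eq hU hD i hi
        exact Set.mem_biUnion (Finset.mem_filter.2 ⟨Finset.mem_univ j, hxj⟩) ⟨hi, hAj⟩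
    refine ⟨W, hWeq, hWmin, fun j => x j, ?_⟩
    show HasLForm A lam K L x (restrictLtil A lam K L (zVec lam W _)) ∧
      HasKForm A lam K L x (restrictLtil A lam K L (zVec lam W _))
        (restrictK A lam K L (zVec lam W _))
    rw [zVec_eq_self fun j hj => (Finset.mem_filter.1 (hW₀ hj)).2]
    exact ⟨h.hasLForm hU, h.hasKForm hU⟩
  · rintro ⟨W, hWeq, -, v, hL, hK⟩
    refine isKLEig_of_hasForms (z := zVec lam W v) hU hD hL hK fun i hi => ?_
    obtain ⟨j, hjW, -, hAj⟩ :=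
      Set.mem_iUnion₂.1 (hWeq ▸ hi : i ∈ ⋃ j ∈ W, CsetKL A lam K L j)
    exact ⟨j, hAj, lam_le_zVec hjW v⟩
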